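/- (case E_6(3) of Theorem 6.4) Let V be a real inner product space and α_1, …, α_6 ∈ V vectors with ⟨α_p, α_p⟩ = 2 for all p, ⟨α_p, α_q⟩ = −1 whenever {p,q} is an edge of the E_6 Dynkin diagram (edges {1,3}, {3,4}, {4,5}, {5,6}, {2,4}), and ⟨α_p, α_q⟩ = 0 otherwise. Let δ ∈ V satisfy ⟨δ, α_p^∨⟩ = 1 for p ≠ 3 and ⟨δ, α_3^∨⟩ = 0 (so δ = −λ_3 + ρ for E_6(3) with special value s_0 = 1). Then the sequence (α_1, α_3) links −α_4 + δ to −2α_3 − α_1 − α_4 + δ: explicitly ⟨−α_4 + δ, α_1^∨⟩ = 1, ⟨s_{α_1}(−α_4 + δ), α_3^∨⟩ = 2, and s_{α_3} s_{α_1}(−α_4 + δ) = −2α_3 − α_1 − α_4 + δ. -/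

import Mathlib

/-!
The simple roots `α_1, α_3, α_4` span an `A_3` subdiagram `1 — 3 — 4`, and only the Gram matrix
of `α_1, α_3, α_4` together with `⟨δ, α_1^∨⟩ = 1`, `⟨δ, α_3^∨⟩ = 0` enters the computation: since
`α_4 ⊥ α_1`, the first reflection pairs `1` and subtracts `α_1`; then `α_1` and `α_4` each
contribute `1` against `α_3^∨`, so the second reflection pairs `2` and subtracts `2α_3`.
-/

open scoped RealInnerProductSpace

noncomputable section

variable {V : Type*} [NormedAddCommGroup V] [InnerProductSpace ℝ V]

/-- The coroot `β^∨ = 2β/⟨β,β⟩`. -/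
def coroot (β : V) : V := (2 / ⟪β, β⟫) • β

/-- The reflection `s_β(v) = v − ⟨v, β^∨⟩ β`. -/
def sRefl (β v : V) : V := v - ⟪v, coroot β⟫ • β

/-- `Links (β_1, …, β_m) δ λ`: with `δ_0 = δ`, `δ_t = s_{β_t}(δ_{t−1})`, one has
`δ_m = λ` and `⟨δ_{t−1}, β_t^∨⟩ ∈ ℤ_{≥0}` for every `t`. -/
inductive Links : List V → V → V → Prop
  | nil (δ : V) : Links [] δ δ
  | cons {β : V} {βs : List V} {δ lam : V} (c : ℕ)
      (hc : ⟪δ, coroot β⟫ = (c : ℝ)) (h : Links βs (sRefl β δ) lam) :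
      Links (β :: βs) δ lam

/-- The edges of the `E_6` Dynkin diagram (in the Bourbaki labelling),
as an unordered relation. -/
def E6Edge (p q : ℕ) : Prop :=
  (p, q) ∈ ({(1, 3), (3, 1), (3, 4), (4, 3), (4, 5), (5, 4), (5, 6), (6, 5), (2, 4), (4, 2)} :
    Set (ℕ × ℕ))

theorem coroot_eq_self_of_inner_self_eq_two {β : V} (hβ : ⟪β, β⟫ = 2) : coroot β = β := by
  rw [coroot, hβ, div_self two_ne_zero, one_smul]

theorem sRefl_eq_sub_smul_of_inner_coroot {β v : V} {c : ℝ} (h : ⟪v, coroot β⟫ = c) :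
    sRefl β v = v - c • β := by
  rw [sRefl, h]

theorem Links.pair {β₁ β₂ δ lam : V} (m n : ℕ) (h₁ : ⟪δ, coroot β₁⟫ = m)
    (h₂ : ⟪sRefl β₁ δ, coroot β₂⟫ = n) (h : sRefl β₂ (sRefl β₁ δ) = lam) :
    Links [β₁, β₂] δ lam :=
  .cons m h₁ (.cons n h₂ (h ▸ .nil _))

theorem link_of_A3_chain {a b c δ : V} (ha : ⟪a, a⟫ = 2) (hb : ⟪b, b⟫ = 2)
    (hab : ⟪a, b⟫ = -1) (hcb : ⟪c, b⟫ = -1) (hca : ⟪c, a⟫ = 0)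
    (hδa : ⟪δ, coroot a⟫ = 1) (hδb : ⟪δ, coroot b⟫ = 0) :
    Links [a, b] (-c + δ) (-((2 : ℝ) • b) - a - c + δ) ∧
    ⟪-c + δ, coroot a⟫ = 1 ∧
    ⟪sRefl a (-c + δ), coroot b⟫ = 2 ∧
    sRefl b (sRefl a (-c + δ)) = -((2 : ℝ) • b) - a - c + δ := by
  have coroot_a := coroot_eq_self_of_inner_self_eq_two ha
  have coroot_b := coroot_eq_self_of_inner_self_eq_two hb
  have pair₁ : ⟪-c + δ, coroot a⟫ = 1 := by
    rw [inner_add_left, inner_neg_left, hδa, coroot_a, hca, neg_zero, zero_add]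
  have refl₁ : sRefl a (-c + δ) = -a - c + δ := by
    rw [sRefl_eq_sub_smul_of_inner_coroot pair₁, one_smul]
    abel
  have pair₂ : ⟪sRefl a (-c + δ), coroot b⟫ = 2 := by
    rw [refl₁, inner_add_left, inner_sub_left, inner_neg_left, hδb, coroot_b, hab, hcb]
    norm_num
  have refl₂ : sRefl b (sRefl a (-c + δ)) = -((2 : ℝ) • b) - a - c + δ := by
    rw [sRefl_eq_sub_smul_of_inner_coroot pair₂, refl₁]
    abel
  exact ⟨Links.pair 1 2 (by rw [pair₁, Nat.cast_one]) (by rw [pair₂, Nat.cast_ofNat]) refl₂,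
    pair₁, pair₂, refl₂⟩

/-- case `E_6(3)` of Theorem 6.4: if `α_1, …, α_6` realize the `E_6`
Dynkin diagram and `δ` pairs to `1` with every simple coroot except `α_3^∨`, where it
pairs to `0` (i.e. `δ = −λ_3 + ρ` with special value `s_0 = 1`), then `(α_1, α_3)`
links `−α_4 + δ` to `−2α_3 − α_1 − α_4 + δ`. -/
theorem link_for_E6_3 (α : ℕ → V) (δ : V)
    (hnorm : ∀ p, 1 ≤ p → p ≤ 6 → ⟪α p, α p⟫ = 2)
    (hedge : ∀ p q, 1 ≤ p → p ≤ 6 → 1 ≤ q → q ≤ 6 → E6Edge p q → ⟪α p, α q⟫ = -1)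
    (hnonedge : ∀ p q, 1 ≤ p → p ≤ 6 → 1 ≤ q → q ≤ 6 → p ≠ q → ¬ E6Edge p q →
      ⟪α p, α q⟫ = 0)
    (hδ : ∀ p, 1 ≤ p → p ≤ 6 → p ≠ 3 → ⟪δ, coroot (α p)⟫ = 1)
    (hδ3 : ⟪δ, coroot (α 3)⟫ = 0) :
    Links [α 1, α 3] (-α 4 + δ) (-((2 : ℝ) • α 3) - α 1 - α 4 + δ) ∧
    ⟪-α 4 + δ, coroot (α 1)⟫ = 1 ∧
    ⟪sRefl (α 1) (-α 4 + δ), coroot (α 3)⟫ = 2 ∧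
    sRefl (α 3) (sRefl (α 1) (-α 4 + δ)) = -((2 : ℝ) • α 3) - α 1 - α 4 + δ :=
  link_of_A3_chain (hnorm 1 le_rfl (by norm_num)) (hnorm 3 (by norm_num) (by norm_num))
    (hedge 1 3 le_rfl (by norm_num) (by norm_num) (by norm_num) (by simp [E6Edge]))
    (hedge 4 3 (by norm_num) (by norm_num) (by norm_num) (by norm_num) (by simp [E6Edge]))
    (hnonedge 4 1 (by norm_num) (by norm_num) le_rfl (by norm_num) (by norm_num)
      (by simp [E6Edge]))
    (hδ 1 le_rfl (by norm_num) (by norm_num)) hδ3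

end
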